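/- Let A be a Noetherian integral domain and let φ : N → M be an injective homomorphism of finitely generated A-modules. Then there exists a nonzero element f ∈ A such that for every maximal ideal 𝔪 of A with f ∉ 𝔪, the induced map of fibers N ⊗_A A/𝔪 → M ⊗_A A/𝔪 (equivalently N/𝔪N → M/𝔪M) is injective. -/

import Mathlib

/-!
Over the fraction field of `A` the injection `φ` splits. As `M` is finitely presented, a
splitting descends to `A` after clearing denominators: `ψ ∘ φ = f • id` for some `f ≠ 0`.
This identity survives `⊗ A/𝔪`, and `f` acts invertibly on `N ⊗ A/𝔪` as soon as `f ∉ 𝔪`.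
-/

open TensorProduct

section Localization

variable {R : Type*} [CommRing R] (S : Submonoid R) {N M N' : Type*}
  [AddCommGroup N] [Module R N] [AddCommGroup M] [Module R M] [AddCommGroup N'] [Module R N']

theorem LinearMap.exists_comp_eq_smul_id_of_isLocalizedModule [Module.Finite R N]
    [Module.FinitePresentation R M] (fN : N →ₗ[R] N') [IsLocalizedModule S fN]
    (φ : N →ₗ[R] M) (g : M →ₗ[R] N') (hg : g ∘ₗ φ = fN) :
    ∃ s : S, ∃ ψ : M →ₗ[R] N, ψ ∘ₗ φ = (s : R) • LinearMap.id := by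
  obtain ⟨ψ, s, hψ⟩ := Module.FinitePresentation.exists_lift_of_isLocalizedModule S fN g
  have hψφ : fN ∘ₗ (ψ ∘ₗ φ) = fN ∘ₗ ((s : R) • LinearMap.id) := by
    rw [← LinearMap.comp_assoc, hψ, LinearMap.smul_comp, hg, LinearMap.comp_smul,
      LinearMap.comp_id]
    rfl
  obtain ⟨t, ht⟩ :=
    Module.Finite.exists_smul_of_comp_eq_of_isLocalizedModule S fN _ _ hψφ
  refine ⟨t * s, (t : R) • ψ, ?_⟩
  rw [LinearMap.smul_comp, Submonoid.coe_mul, mul_smul]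
  exact ht

end Localization

theorem LinearMap.exists_comp_eq_smul_id_of_injective {A N M : Type*} [CommRing A] [IsDomain A]
    [AddCommGroup N] [Module A N] [AddCommGroup M] [Module A M]
    [Module.Finite A N] [Module.FinitePresentation A M]
    (φ : N →ₗ[A] M) (hφ : Function.Injective φ) :
    ∃ f : A, f ≠ 0 ∧ ∃ ψ : M →ₗ[A] N, ψ ∘ₗ φ = f • LinearMap.id := by
  let S := nonZeroDivisors A
  let K := FractionRing A
  let fN := LocalizedModule.mkLinearMap S N
  let fM := LocalizedModule.mkLinearMap S M
  let φK : LocalizedModule S N →ₗ[K] LocalizedModule S M :=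
    (IsLocalizedModule.map S fN fM φ).extendScalarsOfIsLocalization S K
  have hφK : Function.Injective φK := IsLocalizedModule.map_injective S fN fM φ hφ
  obtain ⟨r, hr⟩ := φK.exists_leftInverse_of_injective (LinearMap.ker_eq_bot.mpr hφK)
  have hg : (r.restrictScalars A ∘ₗ fM) ∘ₗ φ = fN := by
    ext x
    exact (congr_arg r (IsLocalizedModule.map_apply S fN fM φ x)).symm.trans
      (LinearMap.congr_fun hr (fN x))
  obtain ⟨s, ψ, hψ⟩ := exists_comp_eq_smul_id_of_isLocalizedModule S fN φ _ hg
  exact ⟨s, nonZeroDivisors.ne_zero s.2, ψ, hψ⟩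

theorem LinearMap.injective_of_comp_eq_smul_id {R N M : Type*} [CommSemiring R]
    [AddCommMonoid N] [Module R N] [AddCommMonoid M] [Module R M]
    {φ : N →ₗ[R] M} {ψ : M →ₗ[R] N} {f : R} (hψφ : ψ ∘ₗ φ = f • LinearMap.id)
    (hf : IsSMulRegular N f) : Function.Injective φ := fun x y hxy ↦
  hf <| by simpa [← LinearMap.comp_apply, hψφ] using congr_arg ψ hxy

theorem isSMulRegular_rTensor_of_isUnit_algebraMap {A B N : Type*} [CommRing A] [CommRing B]
    [Algebra A B] [AddCommGroup N] [Module A N] {f : A} (hf : IsUnit (algebraMap A B f)) :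
    IsSMulRegular (N ⊗[A] B) f :=
  ((TensorProduct.comm A N B).isSMulRegular_congr f).mpr <|
    (isSMulRegular_map (algebraMap A B) (algebraMap_smul B f)).mp (hf.isSMulRegular _)

theorem generic_injectivity_of_fibers (A : Type*) [CommRing A] [IsDomain A]
    [IsNoetherianRing A]
    (N M : Type*) [AddCommGroup N] [Module A N] [AddCommGroup M] [Module A M]
    [Module.Finite A N] [Module.Finite A M]
    (φ : N →ₗ[A] M) (hφ : Function.Injective φ) :
    ∃ f : A, f ≠ 0 ∧ ∀ 𝔪 : Ideal A, 𝔪.IsMaximal → f ∉ 𝔪 →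
      Function.Injective (LinearMap.rTensor (A ⧸ 𝔪) φ) := by
  have := Module.finitePresentation_of_finite A M
  obtain ⟨f, hf, ψ, hψφ⟩ := φ.exists_comp_eq_smul_id_of_injective hφ
  refine ⟨f, hf, fun 𝔪 h𝔪 hf𝔪 ↦ ?_⟩
  have hψφ𝔪 : ψ.rTensor (A ⧸ 𝔪) ∘ₗ φ.rTensor (A ⧸ 𝔪) = f • LinearMap.id := by
    rw [← LinearMap.rTensor_comp, hψφ, LinearMap.rTensor_smul, LinearMap.rTensor_id]
  have hunit : IsUnit (algebraMap A (A ⧸ 𝔪) f) :=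
    letI := Ideal.Quotient.field 𝔪
    isUnit_iff_ne_zero.mpr (mt Ideal.Quotient.eq_zero_iff_mem.mp hf𝔪)
  exact LinearMap.injective_of_comp_eq_smul_id hψφ𝔪
    (isSMulRegular_rTensor_of_isUnit_algebraMap hunit)
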